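/- Let G be a maximal outerplanar graph of order n with n ≡ 1 or 3 (mod 4) and n ≥ 5. Then G has two disjoint total dominating sets. -/
import Mathlib


open SimpleGraph

/-- A diagonal (chord) of a convex `n`-gon with vertices `0, …, n-1` in cyclic order,
recorded as a pair `(i, j)` with `i < j`, joining two non-adjacent vertices. -/
def IsDiag (n : ℕ) (p : ℕ × ℕ) : Prop :=
  p.1 < p.2 ∧ p.2 < n ∧ 2 ≤ p.2 - p.1 ∧ p.2 - p.1 ≤ n - 2

/-- Two diagonals of a convex polygon cross (in their interiors). -/
def Crosses (p q : ℕ × ℕ) : Prop :=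
  (p.1 < q.1 ∧ q.1 < p.2 ∧ p.2 < q.2) ∨ (q.1 < p.1 ∧ p.1 < q.2 ∧ q.2 < p.2)

/-- A triangulation of a convex `n`-gon: `n - 3` pairwise non-crossing diagonals.
This is the standard combinatorial presentation of a maximal outerplanar graph on
`n` vertices (the polygon boundary is the outer Hamiltonian cycle). -/
structure PolyTriangulation (n : ℕ) where
  diags : Finset (ℕ × ℕ)
  isDiag : ∀ p ∈ diags, IsDiag n p
  noncross : ∀ p ∈ diags, ∀ q ∈ diags, ¬ Crosses p q
  card_eq : diags.card = n - 3

/-- The maximal outerplanar graph on `Fin n` given by a polygon triangulation: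
the boundary Hamiltonian cycle `v_i v_{i+1}` together with the diagonals. -/
def PolyTriangulation.graph {n : ℕ} (T : PolyTriangulation n) : SimpleGraph (Fin n) :=
  SimpleGraph.fromRel (fun i j =>
    (i.val + 1) % n = j.val ∨ (min i.val j.val, max i.val j.val) ∈ T.diags)

/-- `S` is a total dominating set of `G`: every vertex has a neighbor in `S`. -/
def IsTotalDom {V : Type*} (G : SimpleGraph V) (S : Set V) : Prop :=
  ∀ v, ∃ u ∈ S, G.Adj v u

/-- `G` has two disjoint total dominating sets (total domatic number at least 2). -/
def HasTwoTDS {V : Type*} (G : SimpleGraph V) : Prop :=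
  ∃ S₁ S₂ : Set V, Disjoint S₁ S₂ ∧ IsTotalDom G S₁ ∧ IsTotalDom G S₂

/-- The degree of a vertex in the maximal outerplanar graph of a triangulation. -/
noncomputable def pdeg {n : ℕ} (T : PolyTriangulation n) (v : Fin n) : ℕ :=
  (T.graph.neighborSet v).ncard

/-- A central vertex: no degree-2 vertex in its closed neighborhood, and indexing the
vertices cyclically starting from `v`, all neighbors of `v` have pairwise congruent
indices mod 4. -/
def IsCentral {n : ℕ} (T : PolyTriangulation n) (v : Fin n) : Prop :=
  (∀ u, (u = v ∨ T.graph.Adj v u) → pdeg T u ≠ 2) ∧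
  (∀ u w, T.graph.Adj v u → T.graph.Adj v w →
    ((u.val + n - v.val) % n) % 4 = ((w.val + n - v.val) % n) % 4)

/-- A generalized sun graph: a maximal outerplanar graph of order `n ≡ 2 (mod 4)`
in which the number of degree-2 vertices plus central vertices equals `n / 2`. -/
def IsGenSun {n : ℕ} (T : PolyTriangulation n) : Prop :=
  n % 4 = 2 ∧
  ({v : Fin n | pdeg T v = 2}.ncard + {v : Fin n | IsCentral T v}.ncard = n / 2)

structure TDSt where
  a : Bool
  sat : Bool
  saf : Bool
  b : Bool
  sbt : Bool
  sbf : Bool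
deriving DecidableEq

def tdCompat (s t : TDSt) : Bool :=
  s.b == t.a && (s.sbt || t.sat) && (s.sbf || t.saf)

def tdComb (s t : TDSt) : TDSt :=
  ⟨s.a, s.sat || t.b, s.saf || !t.b, t.b, t.sbt || s.a, t.sbf || !s.a⟩

def tdMerge (x y : List TDSt) : List TDSt :=
  x.flatMap (fun s => y.filterMap (fun t => if tdCompat s t then some (tdComb s t) else none))

def clAdd (a b : ℕ) : ℕ := min (a + b) (4 + (a + b) % 2)
def clOf (d : ℕ) : ℕ := min d (4 + d % 2)

def tdLeaf : List TDSt :=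
  [⟨false, false, true, false, false, true⟩,
   ⟨false, true, false, true, false, true⟩,
   ⟨true, false, true, false, true, false⟩,
   ⟨true, true, false, true, true, false⟩]

def tdFam : List (List TDSt × ℕ) :=
  [
    ([⟨false, false, true, false, false, true⟩, ⟨false, true, false, true, false, true⟩, ⟨true, false, true, false, true, false⟩, ⟨true, true, false, true, true, false⟩], 1),
    ([⟨false, true, true, true, false, true⟩, ⟨false, true, false, true, true, true⟩, ⟨true, true, true, false, true, false⟩, ⟨true, false, true, false, true, true⟩], 2),
    ([⟨false, true, true, false, true, true⟩, ⟨false, true, true, true, true, true⟩, ⟨true, true, true, false, true, true⟩, ⟨true, true, true, true, true, true⟩], 3),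
    ([⟨false, true, true, false, true, true⟩, ⟨true, true, true, true, true, true⟩], 4),
    ([⟨false, true, true, true, true, true⟩, ⟨true, true, true, false, true, true⟩], 4),
    ([⟨false, true, true, false, true, true⟩, ⟨false, true, true, true, true, true⟩, ⟨true, true, true, false, true, true⟩, ⟨true, true, true, true, true, true⟩], 5),
    ([⟨false, true, true, false, false, true⟩, ⟨false, true, true, true, false, true⟩, ⟨true, true, true, false, true, false⟩, ⟨true, true, true, true, true, false⟩], 5),
    ([⟨false, false, true, false, true, true⟩, ⟨false, true, false, true, true, true⟩, ⟨true, false, true, false, true, true⟩, ⟨true, true, false, true, true, true⟩], 5) ]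

def tdIsFull (s : TDSt) : Bool := s.sat && s.saf && s.sbt && s.sbf

lemma tdLeaf_mem : (tdLeaf, 1) ∈ tdFam := by decide

lemma tdFam_closed : (tdFam.all fun xc => tdFam.all fun yc =>
    tdFam.any fun zc => decide (zc.2 = clAdd xc.2 yc.2) &&
      zc.1.all fun s => decide (s ∈ tdMerge xc.1 yc.1)) = true := by decide

lemma tdFam_full : (tdFam.all fun xc => !(decide (xc.2 = 4)) || xc.1.any tdIsFull) = true := by
  decide

lemma clOf_add (d1 d2 : ℕ) : clOf (d1 + d2) = clAdd (clOf d1) (clOf d2) := by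
  unfold clOf clAdd; omega

lemma tdFam_closed' : ∀ xc ∈ tdFam, ∀ yc ∈ tdFam, ∃ zc ∈ tdFam,
    zc.2 = clAdd xc.2 yc.2 ∧ ∀ s ∈ zc.1, s ∈ tdMerge xc.1 yc.1 := by
  have h := tdFam_closed
  simp only [List.all_eq_true, List.any_eq_true, Bool.and_eq_true, decide_eq_true_eq] at h
  intro xc hx yc hy
  obtain ⟨zc, hz, h1, h2⟩ := h xc hx yc hy
  exact ⟨zc, hz, h1, h2⟩

lemma tdFam_full' : ∀ xc ∈ tdFam, xc.2 = 4 → ∃ s ∈ xc.1, tdIsFull s = true := by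
  have h := tdFam_full
  simp only [List.all_eq_true, Bool.or_eq_true, Bool.not_eq_true', decide_eq_false_iff_not,
    List.any_eq_true] at h
  intro xc hx h4
  rcases h xc hx with h' | h'
  · exact absurd h4 h'
  · exact h'

lemma mem_tdMerge {x y : List TDSt} {s : TDSt} (h : s ∈ tdMerge x y) :
    ∃ s1 ∈ x, ∃ s2 ∈ y, tdCompat s1 s2 = true ∧ tdComb s1 s2 = s := by
  simp only [tdMerge, List.mem_flatMap, List.mem_filterMap] at h
  obtain ⟨s1, h1, s2, h2, h3⟩ := h
  by_cases hc : tdCompat s1 s2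
  · rw [if_pos hc] at h3
    exact ⟨s1, h1, s2, h2, hc, Option.some_injective _ h3⟩
  · rw [if_neg hc] at h3; cases h3

namespace Dev
variable {n : ℕ} (T : PolyTriangulation n)

def tE (i j : ℕ) : Prop := j = i + 1 ∨ (i, j) ∈ T.diags ∨ (i = 0 ∧ j = n - 1)

def tIns (i j : ℕ) : Finset (ℕ × ℕ) :=
  T.diags.filter (fun p => i ≤ p.1 ∧ p.2 ≤ j ∧ ¬(p.1 = i ∧ p.2 = j))

lemma mem_tIns {i j p1 p2 : ℕ} :
    (p1, p2) ∈ tIns T i j ↔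
      (p1, p2) ∈ T.diags ∧ i ≤ p1 ∧ p2 ≤ j ∧ ¬(p1 = i ∧ p2 = j) := by
  simp [tIns, and_assoc]

lemma diag_facts {p1 p2 : ℕ} (h : (p1, p2) ∈ T.diags) :
    p1 < p2 ∧ p2 < n ∧ 2 ≤ p2 - p1 ∧ p2 - p1 ≤ n - 2 := T.isDiag _ h

lemma tIns_small {i j : ℕ} (h : j - i ≤ 2) : tIns T i j = ∅ := by
  rw [Finset.eq_empty_iff_forall_notMem]
  rintro ⟨p1, p2⟩ hp
  rw [mem_tIns] at hp
  obtain ⟨hd, h1, h2, h3⟩ := hp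
  obtain ⟨e1, e2, e3, e4⟩ := diag_facts T hd
  omega

/-- Upper bound: a noncrossing family inside an interval has at most `d - 2` chords. -/
lemma tIns_card_le : ∀ d i j, j - i = d → 2 ≤ d → (tIns T i j).card + 2 ≤ d := by
  intro d
  induction d using Nat.strong_induction_on with
  | _ d IH =>
  intro i j hd h2
  rcases Nat.eq_or_lt_of_le h2 with h2' | h3
  · rw [tIns_small T (by omega)]; simp; omega
  · rcases Finset.eq_empty_or_nonempty ((tIns T i j).filter (fun p => p.1 = i)) with hKS | hKS
    · -- no chord with left endpoint i
      have hsub : tIns T i j ⊆ insert (i + 1, j) (tIns T (i + 1) j) := by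
        rintro ⟨q1, q2⟩ hq
        have hm := (mem_tIns T).1 hq
        have hne : q1 ≠ i := fun hh =>
          Finset.eq_empty_iff_forall_notMem.1 hKS (q1, q2) (Finset.mem_filter.2 ⟨hq, hh⟩)
        obtain ⟨e1, e2, e3, e4⟩ := diag_facts T hm.1
        simp only [Finset.mem_insert]
        by_cases hpj : q1 = i + 1 ∧ q2 = j
        · left; rw [hpj.1, hpj.2]
        · right; exact (mem_tIns T).2 ⟨hm.1, by omega, by omega, hpj⟩
      have hc := Finset.card_le_card hsub
      have hc2 := Finset.card_insert_le (i + 1, j) (tIns T (i + 1) j)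
      have hIH := IH (d - 1) (by omega) (i + 1) j (by omega) (by omega)
      omega
    · -- take the longest chord (i, k) at i
      obtain ⟨⟨p1, p2⟩, hpmem, hmax'⟩ :=
        Finset.exists_max_image ((tIns T i j).filter (fun p => p.1 = i)) Prod.snd hKS
      have hp1 : p1 = i := (Finset.mem_filter.1 hpmem).2
      have hpIns := (Finset.mem_filter.1 hpmem).1
      subst hp1
      set k := p2 with hk2
      have hm0 := (mem_tIns T).1 hpIns
      have hpd : (p1, k) ∈ T.diags := hm0.1
      obtain ⟨e1, e2, e3, e4⟩ := diag_facts T hpd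
      have hkj : k < j := by rcases hm0 with ⟨_, _, hle, hne'⟩; omega
      have hmax : ∀ q1 q2, (q1, q2) ∈ tIns T p1 j → q1 = p1 → q2 ≤ k := by
        intro q1 q2 hmem hq1
        exact hmax' (q1, q2) (Finset.mem_filter.2 ⟨hmem, hq1⟩)
      have hIH1 := IH (k - p1) (by omega) p1 k rfl (by omega)
      by_cases hjk : j - k = 1
      · -- k = j - 1
        have hsub : tIns T p1 j ⊆ insert (p1, k) (tIns T p1 k) := by
          rintro ⟨q1, q2⟩ hq
          have hm := (mem_tIns T).1 hq
          obtain ⟨f1, f2, f3, f4⟩ := diag_facts T hm.1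
          simp only [Finset.mem_insert]
          by_cases hq1 : q1 = p1
          · have hq2k : q2 ≤ k := hmax _ _ hq hq1
            by_cases hq2 : q2 = k
            · left; rw [hq1, hq2]
            · right; exact (mem_tIns T).2 ⟨hm.1, by omega, by omega, by omega⟩
          · have hcr' : ¬((p1 < q1 ∧ q1 < k ∧ k < q2) ∨ (q1 < p1 ∧ p1 < q2 ∧ q2 < k)) :=
              T.noncross (p1, k) hpd (q1, q2) hm.1
            have hq2 : q2 ≤ k := by
              rcases hm with ⟨_, hge, hle, _⟩; omega
            right; exact (mem_tIns T).2 ⟨hm.1, hm.2.1, hq2, by omega⟩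
        have hc := Finset.card_le_card hsub
        have hc2 := Finset.card_insert_le (p1, k) (tIns T p1 k)
        omega
      · -- j - k ≥ 2
        have hIH2 := IH (j - k) (by omega) k j rfl (by omega)
        have hsub : tIns T p1 j ⊆
            insert (p1, k) (insert (k, j) (tIns T p1 k ∪ tIns T k j)) := by
          rintro ⟨q1, q2⟩ hq
          have hm := (mem_tIns T).1 hq
          obtain ⟨f1, f2, f3, f4⟩ := diag_facts T hm.1
          simp only [Finset.mem_insert, Finset.mem_union]
          by_cases hq1 : q1 = p1
          · have hq2k : q2 ≤ k := hmax _ _ hq hq1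
            by_cases hq2 : q2 = k
            · left; rw [hq1, hq2]
            · right; right; left; exact (mem_tIns T).2 ⟨hm.1, by omega, by omega, by omega⟩
          · have hcr' : ¬((p1 < q1 ∧ q1 < k ∧ k < q2) ∨ (q1 < p1 ∧ p1 < q2 ∧ q2 < k)) :=
              T.noncross (p1, k) hpd (q1, q2) hm.1
            by_cases hqk : k ≤ q1
            · by_cases hqkj : q1 = k ∧ q2 = j
              · right; left; rw [hqkj.1, hqkj.2]
              · right; right; right
                exact (mem_tIns T).2 ⟨hm.1, hqk, hm.2.2.1, hqkj⟩
            · have hq2 : q2 ≤ k := by rcases hm with ⟨_, hge, hle, _⟩; omega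
              right; right; left
              exact (mem_tIns T).2 ⟨hm.1, hm.2.1, hq2, by omega⟩
        have hc := Finset.card_le_card hsub
        have hc2 := Finset.card_insert_le (p1, k) (insert (k, j) (tIns T p1 k ∪ tIns T k j))
        have hc3 := Finset.card_insert_le (k, j) (tIns T p1 k ∪ tIns T k j)
        have hc4 := Finset.card_union_le (tIns T p1 k) (tIns T k j)
        omega

lemma tIns_split {i j k : ℕ} (hpd : (i, k) ∈ T.diags) (hkj : k < j)
    (hmax : ∀ q1 q2, (q1, q2) ∈ tIns T i j → q1 = i → q2 ≤ k) :
    tIns T i j ⊆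
      insert (i, k) ((tIns T i k ∪ tIns T k j) ∪ T.diags.filter (fun p => p = (k, j))) := by
  obtain ⟨e1, e2, e3, e4⟩ := diag_facts T hpd
  rintro ⟨q1, q2⟩ hq
  have hm := (mem_tIns T).1 hq
  obtain ⟨f1, f2, f3, f4⟩ := diag_facts T hm.1
  simp only [Finset.mem_insert, Finset.mem_union, Finset.mem_filter]
  by_cases hq1 : q1 = i
  · have hq2k : q2 ≤ k := hmax _ _ hq hq1
    by_cases hq2 : q2 = k
    · left; rw [hq1, hq2]
    · right; left; left; exact (mem_tIns T).2 ⟨hm.1, by omega, by omega, by omega⟩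
  · have hcr' : ¬((i < q1 ∧ q1 < k ∧ k < q2) ∨ (q1 < i ∧ i < q2 ∧ q2 < k)) :=
      T.noncross (i, k) hpd (q1, q2) hm.1
    by_cases hqk : k ≤ q1
    · by_cases hqkj : q1 = k ∧ q2 = j
      · right; right; refine ⟨hm.1, ?_⟩; rw [hqkj.1, hqkj.2]
      · right; left; right
        exact (mem_tIns T).2 ⟨hm.1, hqk, hm.2.2.1, hqkj⟩
    · have hq2 : q2 ≤ k := by rcases hm with ⟨_, hge, hle, _⟩; omega
      right; left; left
      exact (mem_tIns T).2 ⟨hm.1, hm.2.1, hq2, by omega⟩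

lemma diag_filter_card_le {k j : ℕ} :
    (T.diags.filter (fun p => p = (k, j))).card ≤ 1 := by
  refine Finset.card_le_one.2 ?_
  intro a ha b hb
  rw [Finset.mem_filter] at ha hb
  rw [ha.2, hb.2]

lemma diag_filter_empty {k j : ℕ} (h : j - k ≤ 1) :
    T.diags.filter (fun p => p = (k, j)) = ∅ := by
  rw [Finset.eq_empty_iff_forall_notMem]
  intro p hp
  rw [Finset.mem_filter] at hp
  have := diag_facts T (hp.2 ▸ hp.1)
  omega

/-- Apex: in a fully triangulated interval, the base edge is in a triangle,
and the two sub-intervals are fully triangulated. -/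
lemma apex {i j d : ℕ} (hd : j - i = d) (h2 : 2 ≤ d)
    (hcnt : (tIns T i j).card + 2 = d) :
    ∃ k, i < k ∧ k < j ∧ tE T i k ∧ tE T k j ∧
      (2 ≤ k - i → (tIns T i k).card + 2 = k - i) ∧
      (2 ≤ j - k → (tIns T k j).card + 2 = j - k) := by
  rcases Nat.eq_or_lt_of_le h2 with h2' | h3
  · exact ⟨i + 1, by omega, by omega, Or.inl rfl, Or.inl (by omega),
      by omega, by omega⟩
  · rcases Finset.eq_empty_or_nonempty ((tIns T i j).filter (fun p => p.1 = i)) with hKS | hKS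
    · -- no chord at i : apex is i+1 with chord (i+1, j)
      have hsub : ∀ q1 q2, (q1, q2) ∈ tIns T i j →
          (q1, q2) = (i + 1, j) ∨ (q1, q2) ∈ tIns T (i + 1) j := by
        rintro q1 q2 hq
        have hm := (mem_tIns T).1 hq
        have hne : q1 ≠ i := fun hh =>
          Finset.eq_empty_iff_forall_notMem.1 hKS (q1, q2) (Finset.mem_filter.2 ⟨hq, hh⟩)
        obtain ⟨f1, f2, f3, f4⟩ := diag_facts T hm.1
        by_cases hpj : q1 = i + 1 ∧ q2 = j
        · left; rw [hpj.1, hpj.2]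
        · right; exact (mem_tIns T).2 ⟨hm.1, by omega, by omega, hpj⟩
      have hub : (tIns T (i + 1) j).card + 3 ≤ d := by
        rcases Nat.lt_or_ge d 4 with h4 | h4
        · rw [tIns_small T (by omega)]; simp; omega
        · have := tIns_card_le T (d - 1) (i + 1) j (by omega) (by omega); omega
      have hsub' : tIns T i j ⊆ insert (i + 1, j) (tIns T (i + 1) j) := by
        rintro ⟨q1, q2⟩ hq
        simp only [Finset.mem_insert]
        exact hsub q1 q2 hq
      have hmemdiag : (i + 1, j) ∈ T.diags := by
        by_contra hnd
        have hsub2 : tIns T i j ⊆ tIns T (i + 1) j := by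
          rintro ⟨q1, q2⟩ hq
          rcases hsub q1 q2 hq with he | he
          · exfalso; exact hnd (he ▸ ((mem_tIns T).1 hq).1)
          · exact he
        have := Finset.card_le_card hsub2
        omega
      have hc := Finset.card_le_card hsub'
      have hc2 := Finset.card_insert_le (i + 1, j) (tIns T (i + 1) j)
      refine ⟨i + 1, by omega, by omega, Or.inl rfl, Or.inr (Or.inl hmemdiag),
        by omega, fun _ => by omega⟩
    · -- longest chord (i, k) at i
      obtain ⟨⟨p1, p2⟩, hpmem, hmax'⟩ :=
        Finset.exists_max_image ((tIns T i j).filter (fun p => p.1 = i)) Prod.snd hKS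
      have hp1 : p1 = i := (Finset.mem_filter.1 hpmem).2
      have hpIns := (Finset.mem_filter.1 hpmem).1
      subst hp1
      set k := p2 with hk2
      have hm0 := (mem_tIns T).1 hpIns
      have hpd : (p1, k) ∈ T.diags := hm0.1
      obtain ⟨e1, e2, e3, e4⟩ := diag_facts T hpd
      have hkj : k < j := by rcases hm0 with ⟨_, _, hle, hne'⟩; omega
      have hmax : ∀ q1 q2, (q1, q2) ∈ tIns T p1 j → q1 = p1 → q2 ≤ k := by
        intro q1 q2 hmem hq1
        exact hmax' (q1, q2) (Finset.mem_filter.2 ⟨hmem, hq1⟩)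
      have hsplit := tIns_split T hpd hkj hmax
      have hc := Finset.card_le_card hsplit
      have hc2 := Finset.card_insert_le (p1, k)
        ((tIns T p1 k ∪ tIns T k j) ∪ T.diags.filter (fun p => p = (k, j)))
      have hc3 := Finset.card_union_le (tIns T p1 k ∪ tIns T k j)
        (T.diags.filter (fun p => p = (k, j)))
      have hc4 := Finset.card_union_le (tIns T p1 k) (tIns T k j)
      have hub1 := tIns_card_le T (k - p1) p1 k rfl (by omega)
      by_cases hjk : j - k = 1
      · have hemp1 : tIns T k j = ∅ := tIns_small T (by omega)
        have hemp2 : T.diags.filter (fun p => p = (k, j)) = ∅ :=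
          diag_filter_empty T (by omega)
        have hz1 : (tIns T k j).card = 0 := by rw [hemp1]; rfl
        have hz2 : (T.diags.filter (fun p => p = (k, j))).card = 0 := by rw [hemp2]; rfl
        refine ⟨k, by omega, hkj, Or.inr (Or.inl hpd), Or.inl (by omega),
          fun _ => by omega, by omega⟩
      · have hub2 := tIns_card_le T (j - k) k j rfl (by omega)
        have hfc := diag_filter_card_le T (k := k) (j := j)
        have hmemdiag : (k, j) ∈ T.diags := by
          by_contra hnd
          have hemp2 : T.diags.filter (fun p => p = (k, j)) = ∅ := by
            rw [Finset.eq_empty_iff_forall_notMem]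
            intro p hp
            rw [Finset.mem_filter] at hp
            exact hnd (hp.2 ▸ hp.1)
          have hz2 : (T.diags.filter (fun p => p = (k, j))).card = 0 := by rw [hemp2]; rfl
          omega
        refine ⟨k, by omega, hkj, Or.inr (Or.inl hpd), Or.inr (Or.inl hmemdiag),
          fun _ => by omega, fun _ => by omega⟩


end Dev

namespace Dev2
open Dev

variable {n : ℕ} (T : PolyTriangulation n)

def tSem (i j : ℕ) (f : ℕ → Bool) (s : TDSt) : Prop :=
  f i = s.a ∧ f j = s.b ∧
  (s.sat = true → ∃ u, i < u ∧ u ≤ j ∧ tE T i u ∧ f u = true) ∧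
  (s.saf = true → ∃ u, i < u ∧ u ≤ j ∧ tE T i u ∧ f u = false) ∧
  (s.sbt = true → ∃ u, i ≤ u ∧ u < j ∧ tE T u j ∧ f u = true) ∧
  (s.sbf = true → ∃ u, i ≤ u ∧ u < j ∧ tE T u j ∧ f u = false) ∧
  (∀ v, i < v → v < j → ∀ c : Bool, ∃ u, i ≤ u ∧ u ≤ j ∧ (tE T u v ∨ tE T v u) ∧ f u = c)

lemma leaf_sem {i : ℕ} (hE : tE T i (i + 1)) (a b : Bool) :
    tSem T i (i + 1) (fun v => if v = i then a else b) ⟨a, b, !b, b, a, !a⟩ := by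
  have hfi : (fun v => if v = i then a else b) i = a := by simp
  have hfj : (fun v => if v = i then a else b) (i + 1) = b := by simp
  refine ⟨hfi, hfj, ?_, ?_, ?_, ?_, ?_⟩
  · intro hb; exact ⟨i + 1, by omega, le_rfl, hE, by rw [hfj]; exact hb⟩
  · intro hb
    refine ⟨i + 1, by omega, le_rfl, hE, by rw [hfj]; exact Bool.not_eq_true' _ ▸ hb⟩
  · intro ha; exact ⟨i, le_rfl, by omega, hE, by rw [hfi]; exact ha⟩
  · intro ha
    refine ⟨i, le_rfl, by omega, hE, by rw [hfi]; exact Bool.not_eq_true' _ ▸ ha⟩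
  · intro v hv1 hv2; omega

lemma sem_glue {i k j : ℕ} (hik : i < k) (hkj : k < j) (hE : tE T i j)
    {s1 s2 : TDSt} (hcomp : tdCompat s1 s2 = true)
    {f1 f2 : ℕ → Bool} (h1 : tSem T i k f1 s1) (h2 : tSem T k j f2 s2) :
    tSem T i j (fun v => if v ≤ k then f1 v else f2 v) (tdComb s1 s2) := by
  obtain ⟨g1, g2, g3, g4, g5, g6, g7⟩ := h1
  obtain ⟨m1, m2, m3, m4, m5, m6, m7⟩ := h2
  have hcomp' : (s1.b == s2.a) = true ∧ (s1.sbt || s2.sat) = true ∧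
      (s1.sbf || s2.saf) = true := by
    unfold tdCompat at hcomp
    rw [Bool.and_eq_true, Bool.and_eq_true] at hcomp
    exact ⟨hcomp.1.1, hcomp.1.2, hcomp.2⟩
  have hba : s1.b = s2.a := beq_iff_eq.mp hcomp'.1
  have hct := hcomp'.2.1
  have hcf := hcomp'.2.2
  have hagree : ∀ u, k ≤ u → (fun v => if v ≤ k then f1 v else f2 v) u = f2 u := by
    intro u hu
    by_cases hu' : u ≤ k
    · have huk : u = k := by omega
      subst huk
      simp only [if_pos le_rfl]
      rw [g2, m1, hba]
    · simp only [if_neg hu']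
  refine ⟨?_, ?_, ?_, ?_, ?_, ?_, ?_⟩
  · simp only [if_pos (by omega : i ≤ k)]; exact g1
  · rw [hagree j (by omega)]; exact m2
  · intro hh
    rcases Bool.or_eq_true _ _ |>.mp hh with hx | hx
    · obtain ⟨u, hu1, hu2, hu3, hu4⟩ := g3 hx
      exact ⟨u, hu1, by omega, hu3, by simp only [if_pos hu2]; exact hu4⟩
    · exact ⟨j, by omega, le_rfl, hE, by rw [hagree j (by omega), m2]; exact hx⟩
  · intro hh
    rcases Bool.or_eq_true _ _ |>.mp hh with hx | hx
    · obtain ⟨u, hu1, hu2, hu3, hu4⟩ := g4 hx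
      exact ⟨u, hu1, by omega, hu3, by simp only [if_pos hu2]; exact hu4⟩
    · refine ⟨j, by omega, le_rfl, hE, ?_⟩
      rw [hagree j (by omega), m2]
      exact Bool.not_eq_true' _ ▸ hx
  · intro hh
    rcases Bool.or_eq_true _ _ |>.mp hh with hx | hx
    · obtain ⟨u, hu1, hu2, hu3, hu4⟩ := m5 hx
      exact ⟨u, by omega, hu2, hu3, by rw [hagree u hu1]; exact hu4⟩
    · exact ⟨i, le_rfl, by omega, hE, by simp only [if_pos (by omega : i ≤ k)]; rw [g1]; exact hx⟩
  · intro hh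
    rcases Bool.or_eq_true _ _ |>.mp hh with hx | hx
    · obtain ⟨u, hu1, hu2, hu3, hu4⟩ := m6 hx
      exact ⟨u, by omega, hu2, hu3, by rw [hagree u hu1]; exact hu4⟩
    · refine ⟨i, le_rfl, by omega, hE, ?_⟩
      simp only [if_pos (by omega : i ≤ k)]
      rw [g1]
      exact Bool.not_eq_true' _ ▸ hx
  · intro v hv1 hv2 c
    rcases Nat.lt_trichotomy v k with hv | hv | hv
    · obtain ⟨u, hu1, hu2, hu3, hu4⟩ := g7 v hv1 hv c
      exact ⟨u, hu1, by omega, hu3, by simp only [if_pos hu2]; exact hu4⟩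
    · subst hv
      cases c with
      | false =>
        rcases Bool.or_eq_true _ _ |>.mp hcf with hx | hx
        · obtain ⟨u, hu1, hu2, hu3, hu4⟩ := g6 hx
          exact ⟨u, by omega, by omega, Or.inl hu3,
            by simp only [if_pos (by omega : u ≤ v)]; exact hu4⟩
        · obtain ⟨u, hu1, hu2, hu3, hu4⟩ := m4 hx
          exact ⟨u, by omega, hu2, Or.inr hu3, by rw [hagree u (by omega)]; exact hu4⟩
      | true =>
        rcases Bool.or_eq_true _ _ |>.mp hct with hx | hx
        · obtain ⟨u, hu1, hu2, hu3, hu4⟩ := g5 hx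
          exact ⟨u, by omega, by omega, Or.inl hu3,
            by simp only [if_pos (by omega : u ≤ v)]; exact hu4⟩
        · obtain ⟨u, hu1, hu2, hu3, hu4⟩ := m3 hx
          exact ⟨u, by omega, hu2, Or.inr hu3, by rw [hagree u (by omega)]; exact hu4⟩
    · obtain ⟨u, hu1, hu2, hu3, hu4⟩ := m7 v hv hv2 c
      exact ⟨u, by omega, hu2, hu3, by rw [hagree u (by omega)]; exact hu4⟩

lemma master : ∀ d i j, j - i = d → 1 ≤ d → j ≤ n - 1 → tE T i j →
    (2 ≤ d → (tIns T i j).card + 2 = d) →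
    ∃ xc ∈ tdFam, xc.2 = clOf d ∧ ∀ s ∈ xc.1, ∃ f : ℕ → Bool, tSem T i j f s := by
  intro d
  induction d using Nat.strong_induction_on with
  | _ d IH =>
  intro i j hd h1 hjn hE hcnt
  rcases Nat.eq_or_lt_of_le h1 with h1' | h2
  · obtain rfl : d = 1 := by omega
    obtain rfl : j = i + 1 := by omega
    refine ⟨(tdLeaf, 1), tdLeaf_mem, by decide, ?_⟩
    intro s hs
    simp only [tdLeaf, List.mem_cons, List.not_mem_nil, or_false] at hs
    rcases hs with rfl | rfl | rfl | rfl
    · exact ⟨_, leaf_sem T hE false false⟩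
    · exact ⟨_, leaf_sem T hE false true⟩
    · exact ⟨_, leaf_sem T hE true false⟩
    · exact ⟨_, leaf_sem T hE true true⟩
  · have h2' : 2 ≤ d := h2
    obtain ⟨k, hik, hkj, hEik, hEkj, hcl, hcr⟩ := apex T hd h2' (hcnt h2')
    obtain ⟨xc1, hx1mem, hx1cl, hach1⟩ :=
      IH (k - i) (by omega) i k rfl (by omega) (by omega) hEik hcl
    obtain ⟨xc2, hx2mem, hx2cl, hach2⟩ :=
      IH (j - k) (by omega) k j rfl (by omega) hjn hEkj hcr
    obtain ⟨zc, hzmem, hzcl, hzsub⟩ := tdFam_closed' xc1 hx1mem xc2 hx2mem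
    refine ⟨zc, hzmem, ?_, ?_⟩
    · rw [hzcl, hx1cl, hx2cl, ← clOf_add]
      congr 1
      omega
    · intro s hs
      obtain ⟨s1, hs1, s2, hs2, hcomp, hcomb⟩ := mem_tdMerge (hzsub s hs)
      obtain ⟨f1, hf1⟩ := hach1 s1 hs1
      obtain ⟨f2, hf2⟩ := hach2 s2 hs2
      exact ⟨_, hcomb ▸ sem_glue T hik hkj hE hcomp hf1 hf2⟩

lemma tE_lt {a b : ℕ} (hn5 : 5 ≤ n) (h : tE T a b) : a < b := by
  rcases h with h | h | h
  · omega
  · exact (diag_facts T h).1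
  · omega

lemma tE_adj' (hn5 : 5 ≤ n) {a b : ℕ} (h : tE T a b) (hb : b ≤ n - 1)
    (va vb : Fin n) (hva : (va : ℕ) = a) (hvb : (vb : ℕ) = b) : T.graph.Adj va vb := by
  have hab : a < b := tE_lt T hn5 h
  have hne : va ≠ vb := by
    intro hh
    rw [hh, hvb] at hva
    omega
  unfold PolyTriangulation.graph
  rw [SimpleGraph.fromRel_adj]
  refine ⟨hne, ?_⟩
  rcases h with hc | hc | hc
  · left; left
    rw [hva, hvb, Nat.mod_eq_of_lt (by omega : a + 1 < n)]
    omega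
  · left; right
    rw [hva, hvb, Nat.min_eq_left (Nat.le_of_lt hab), Nat.max_eq_right (Nat.le_of_lt hab)]
    exact hc
  · right; left
    rw [hva, hvb, hc.1, hc.2, show n - 1 + 1 = n by omega, Nat.mod_self]

end Dev2

/-- a maximal outerplanar graph of order `n ≡ 1, 3 (mod 4)`, `n ≥ 5`,
has two disjoint total dominating sets. -/
theorem stmt8 (n : ℕ) (hn : 5 ≤ n) (h : n % 4 = 1 ∨ n % 4 = 3)
    (T : PolyTriangulation n) :
    HasTwoTDS T.graph := by
  classical
  have hins : Dev.tIns T 0 (n - 1) = T.diags := by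
    rw [Dev.tIns]
    apply Finset.filter_true_of_mem
    rintro ⟨p1, p2⟩ hp
    obtain ⟨e1, e2, e3, e4⟩ := Dev.diag_facts T hp
    exact ⟨by omega, by omega, by omega⟩
  obtain ⟨xc, hxmem, hxcl, hach⟩ := Dev2.master T (n - 1) 0 (n - 1) (by omega) (by omega)
      le_rfl (Or.inr (Or.inr ⟨rfl, rfl⟩))
      (fun _ => by rw [hins, T.card_eq]; omega)
  have hx4 : xc.2 = 4 := by rw [hxcl]; unfold clOf; omega
  obtain ⟨s, hsmem, hsfull⟩ := tdFam_full' xc hxmem hx4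
  obtain ⟨f, hsem⟩ := hach s hsmem
  have hsfull' : s.sat = true ∧ s.saf = true ∧ s.sbt = true ∧ s.sbf = true := by
    unfold tdIsFull at hsfull
    rw [Bool.and_eq_true, Bool.and_eq_true, Bool.and_eq_true] at hsfull
    exact ⟨hsfull.1.1.1, hsfull.1.1.2, hsfull.1.2, hsfull.2⟩
  obtain ⟨hsat, hsaf, hsbt, hsbf⟩ := hsfull'
  obtain ⟨g1, g2, g3, g4, g5, g6, g7⟩ := hsem
  have key : ∀ (v : Fin n) (c : Bool), ∃ u : Fin n, f u.val = c ∧ T.graph.Adj v u := by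
    intro v c
    have hvn : v.val < n := v.isLt
    by_cases hv0 : v.val = 0
    · have hg : ∃ u, 0 < u ∧ u ≤ n - 1 ∧ Dev.tE T 0 u ∧ f u = c := by
        cases c
        · exact g4 hsaf
        · exact g3 hsat
      obtain ⟨u, hu1, hu2, hu3, hu4⟩ := hg
      exact ⟨⟨u, by omega⟩, hu4, Dev2.tE_adj' T hn hu3 hu2 v ⟨u, by omega⟩ hv0 rfl⟩
    · by_cases hvn1 : v.val = n - 1
      · have hg : ∃ u, 0 ≤ u ∧ u < n - 1 ∧ Dev.tE T u (n - 1) ∧ f u = c := by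
          cases c
          · exact g6 hsbf
          · exact g5 hsbt
        obtain ⟨u, hu1, hu2, hu3, hu4⟩ := hg
        exact ⟨⟨u, by omega⟩, hu4,
          (Dev2.tE_adj' T hn hu3 le_rfl ⟨u, by omega⟩ v rfl hvn1).symm⟩
      · obtain ⟨u, hu1, hu2, horr, hu4⟩ := g7 v.val (by omega) (by omega) c
        rcases horr with he | he
        · exact ⟨⟨u, by omega⟩, hu4,
            (Dev2.tE_adj' T hn he (by omega) ⟨u, by omega⟩ v rfl rfl).symm⟩
        · exact ⟨⟨u, by omega⟩, hu4, Dev2.tE_adj' T hn he hu2 v ⟨u, by omega⟩ rfl rfl⟩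
  refine ⟨{v : Fin n | f v.val = true}, {v : Fin n | f v.val = false}, ?_, ?_, ?_⟩
  · rw [Set.disjoint_left]
    rintro v hv1 hv2
    simp only [Set.mem_setOf_eq] at hv1 hv2
    rw [hv1] at hv2
    cases hv2
  · intro v
    obtain ⟨u, hu, hadj⟩ := key v true
    exact ⟨u, hu, hadj⟩
  · intro v
    obtain ⟨u, hu, hadj⟩ := key v false
    exact ⟨u, hu, hadj⟩
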